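/- arXiv:1805.08864 — 7 statements merged into one kernel-verified Lean document; each statement's English description precedes it below -/
import Mathlib

section
/- Let U be a real vector space and V a real Hilbert space, and let b : U × V → ℝ be bilinear such that for each u ∈ U the functional Bu : v ↦ b(u,v) is continuous on V. Let T : U → V be the trial-to-test operator, i.e. Tu is the Riesz representative of Bu, so that ⟨Tu, v⟩_V = b(u,v) for all v ∈ V. Let L be a continuous linear functional on V, let U_h ⊆ U be a linear subspace, and let u_h ∈ U_h. Then b(u_h, T(δu)) = L(T(δu)) for all δu ∈ U_h if and only if u_h minimizes the residual over U_h, i.e. ‖L − B u_h‖_{V'} ≤ ‖L − B w‖_{V'} for all w ∈ U_h. -/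
open RealInnerProductSpace

/-- Equivalence of the DPG scheme with optimal test functions (via the
trial-to-test operator `T`) and residual minimization in the dual norm of the test space.
The bilinear form `b` with `b(u,·)` continuous is encoded as a linear map
`B : U →ₗ[ℝ] (V →L[ℝ] ℝ)`. -/
theorem stmt1
    {U : Type*} [AddCommGroup U] [Module ℝ U]
    {V : Type*} [NormedAddCommGroup V] [InnerProductSpace ℝ V] [CompleteSpace V]
    (B : U →ₗ[ℝ] (V →L[ℝ] ℝ))
    (T : U → V) (hT : ∀ (u : U) (v : V), ⟪T u, v⟫ = B u v)
    (L : V →L[ℝ] ℝ) (Uh : Submodule ℝ U) (uh : U) (huh : uh ∈ Uh) :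
    (∀ δu ∈ Uh, B uh (T δu) = L (T δu)) ↔
      (∀ w ∈ Uh, ‖L - B uh‖ ≤ ‖L - B w‖) := by
  set D := InnerProductSpace.toDual ℝ V with hD
  have hTD : ∀ u, D (T u) = B u := by
    intro u; ext v
    simpa [hD, InnerProductSpace.toDual_apply_apply] using hT u v
  set ℓ := D.symm L with hl
  have hLs : ∀ v : V, L v = ⟪ℓ, v⟫ := by
    intro v
    rw [hl]
    exact (InnerProductSpace.toDual_symm_apply (𝕜 := ℝ) (E := V) (y := L) (x := v)).symm
  have hTlin : ∀ (u u' : U) (c : ℝ), T (u + c • u') = T u + c • T u' := by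
    intro u u' c
    apply ext_inner_right ℝ
    intro v
    rw [hT]
    simp [inner_add_left, real_inner_smul_left, hT]
  have hnorm : ∀ w : U, ‖L - B w‖ = ‖ℓ - T w‖ := by
    intro w
    rw [← D.norm_map (ℓ - T w)]
    congr 1
    rw [map_sub, hTD, hl, D.apply_symm_apply]
  constructor
  · intro h w hw
    rw [hnorm, hnorm]
    set d := T uh - T w with hd
    have hdT : d = T (uh + (-1 : ℝ) • w) := by
      rw [hTlin]; simp [hd, sub_eq_add_neg]
    have hmem : uh + (-1 : ℝ) • w ∈ Uh := Uh.add_mem huh (Uh.smul_mem _ hw)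
    have horth : ⟪ℓ - T uh, d⟫ = 0 := by
      have := h _ hmem
      rw [← hT, hLs] at this
      rw [inner_sub_left, hdT, this]
      ring
    have hsplit : ℓ - T w = (ℓ - T uh) + d := by rw [hd]; abel
    have h2 : ‖ℓ - T w‖ ^ 2 = ‖ℓ - T uh‖ ^ 2 + ‖d‖ ^ 2 := by
      rw [hsplit, norm_add_sq_real, horth]; ring
    nlinarith [norm_nonneg (ℓ - T w), norm_nonneg (ℓ - T uh), sq_nonneg ‖d‖]
  · intro h δu hδu
    rw [← hT, hLs]
    set e := ℓ - T uh with he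
    set x := T δu with hx
    clear_value e x
    have key : ∀ t : ℝ, ‖e‖ ^ 2 ≤ ‖e - t • x‖ ^ 2 := by
      intro t
      have hmem : uh + t • δu ∈ Uh := Uh.add_mem huh (Uh.smul_mem _ hδu)
      have := h _ hmem
      rw [hnorm, hnorm, hTlin] at this
      have heq : ℓ - (T uh + t • T δu) = e - t • x := by rw [he, hx]; abel
      rw [heq, ← he] at this
      have h0 : (0:ℝ) ≤ ‖e‖ := norm_nonneg _
      nlinarith [norm_nonneg (e - t • x)]
    have hinner : ⟪e, x⟫ = 0 := by
      by_cases hx0 : x = 0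
      · simp [hx0]
      · have hxp : (0:ℝ) < ‖x‖ := norm_pos_iff.mpr hx0
        have hxn : (0:ℝ) < ‖x‖ ^ 2 := by positivity
        have hexp : ∀ t : ℝ, ‖e - t • x‖ ^ 2
            = ‖e‖ ^ 2 - 2 * (t * ⟪e, x⟫) + t ^ 2 * ‖x‖ ^ 2 := by
          intro t
          rw [norm_sub_sq_real, real_inner_smul_right, norm_smul, mul_pow, Real.norm_eq_abs, sq_abs]
        have := key (⟪e, x⟫ / ‖x‖ ^ 2)
        rw [hexp] at this
        have hdiv : (⟪e, x⟫ / ‖x‖ ^ 2) * ‖x‖ ^ 2 = ⟪e, x⟫ := by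
          field_simp
        nlinarith [sq_nonneg ⟪e, x⟫]
    have h2 : ⟪ℓ, x⟫ - ⟪T uh, x⟫ = 0 := by
      rw [← inner_sub_left, ← he]; exact hinner
    linarith [h2]
end

section
/- Let U be a real normed space and V a real Hilbert space, and let b : U × V → ℝ be bilinear. Suppose there are constants c₁, c₂ > 0 with c₁·‖w‖_U ≤ sup_{v ∈ V, v ≠ 0} b(w,v)/‖v‖_V ≤ c₂·‖w‖_U for all w ∈ U. Let T : U → V be the trial-to-test operator (⟨Tw, v⟩_V = b(w,v) for all v ∈ V), let L be a continuous linear functional on V, and let u ∈ U satisfy b(u,v) = L(v) for all v ∈ V. If U_h ⊆ U is a linear subspace and u_h ∈ U_h satisfies b(u_h, T(δu)) = L(T(δu)) for all δu ∈ U_h, then ‖u − u_h‖_U ≤ (c₂/c₁)·‖u − w‖_U for all w ∈ U_h. -/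
open RealInnerProductSpace

/-- Quasi-optimal convergence of the ideal DPG method: if the energy norm
`w ↦ sup_{v ≠ 0} b(w,v)/‖v‖` is uniformly equivalent to the trial norm, then the DPG
solution (defined with the trial-to-test operator `T`) is quasi-optimal with constant
`c₂/c₁`. -/
theorem stmt2
    {U : Type*} [NormedAddCommGroup U] [NormedSpace ℝ U]
    {V : Type*} [NormedAddCommGroup V] [InnerProductSpace ℝ V] [CompleteSpace V]
    (b : U →ₗ[ℝ] V →ₗ[ℝ] ℝ) (c₁ c₂ : ℝ) (hc₁ : 0 < c₁) (hc₂ : 0 < c₂)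
    (hlow : ∀ w : U, c₁ * ‖w‖ ≤ ⨆ v : {v : V // v ≠ 0}, b w v / ‖(v : V)‖)
    (hup : ∀ w : U, (⨆ v : {v : V // v ≠ 0}, b w v / ‖(v : V)‖) ≤ c₂ * ‖w‖)
    (T : U → V) (hT : ∀ (w : U) (v : V), ⟪T w, v⟫ = b w v)
    (L : V →L[ℝ] ℝ) (u : U) (hu : ∀ v : V, b u v = L v)
    (Uh : Submodule ℝ U) (uh : U) (huh : uh ∈ Uh)
    (hsol : ∀ δu ∈ Uh, b uh (T δu) = L (T δu)) :
    ∀ w ∈ Uh, ‖u - uh‖ ≤ (c₂ / c₁) * ‖u - w‖ := by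
  intro w hw
  -- per-element bound: b x v / ‖v‖ ≤ ‖T x‖
  have hterm : ∀ (x : U) (v : {v : V // v ≠ 0}), b x v / ‖(v : V)‖ ≤ ‖T x‖ := by
    intro x v
    have hv : (0:ℝ) < ‖(v : V)‖ := norm_pos_iff.mpr v.2
    rw [div_le_iff₀ hv, ← hT]
    exact real_inner_le_norm _ _
  -- the energy norm is bounded above by ‖T x‖
  have hEle : ∀ x : U, (⨆ v : {v : V // v ≠ 0}, b x v / ‖(v : V)‖) ≤ ‖T x‖ := by
    intro x
    exact Real.iSup_le (hterm x) (norm_nonneg _)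
  -- lower bound : c₁‖x‖ ≤ ‖T x‖
  have hlowT : ∀ x : U, c₁ * ‖x‖ ≤ ‖T x‖ := fun x => (hlow x).trans (hEle x)
  -- upper bound : ‖T x‖ ≤ c₂‖x‖
  have hupT : ∀ x : U, ‖T x‖ ≤ c₂ * ‖x‖ := by
    intro x
    by_cases hx : T x = 0
    · rw [hx, norm_zero]; positivity
    · have hTx : (0:ℝ) < ‖T x‖ := norm_pos_iff.mpr hx
      have h1 : ‖T x‖ = b x (T x) / ‖T x‖ := by
        rw [← hT, real_inner_self_eq_norm_mul_norm]
        field_simp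
      have h2 : b x (T x) / ‖T x‖ ≤ ⨆ v : {v : V // v ≠ 0}, b x v / ‖(v : V)‖ := by
        have hbdd : BddAbove (Set.range fun v : {v : V // v ≠ 0} => b x v / ‖(v : V)‖) :=
          ⟨‖T x‖, by rintro _ ⟨v, rfl⟩; exact hterm x v⟩
        exact le_ciSup hbdd (⟨T x, hx⟩ : {v : V // v ≠ 0})
      calc ‖T x‖ = b x (T x) / ‖T x‖ := h1
        _ ≤ _ := h2
        _ ≤ c₂ * ‖x‖ := hup x
  -- T is "additive" in the needed sense: T(x-y) = T x - T y
  have hTsub : ∀ x y : U, T (x - y) = T x - T y := by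
    intro x y
    apply ext_inner_right ℝ
    intro v
    rw [hT, inner_sub_left, hT, hT, map_sub]
    simp
  -- Galerkin orthogonality
  have horth : ∀ δu ∈ Uh, ⟪T u - T uh, T δu⟫ = (0:ℝ) := by
    intro δu hδu
    rw [inner_sub_left, hT, hT, hu, hsol δu hδu, sub_self]
  -- ‖T(u - uh)‖ ≤ ‖T(u - w)‖
  have hkey : ‖T (u - uh)‖ ≤ ‖T (u - w)‖ := by
    rw [hTsub, hTsub]
    have hsq : ‖T u - T uh‖ * ‖T u - T uh‖ ≤ ‖T u - T uh‖ * ‖T u - T w‖ := by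
      have : ⟪T u - T uh, T u - T uh⟫ = ⟪T u - T uh, T u - T w⟫ := by
        have h0 : ⟪T u - T uh, T w - T uh⟫ = (0:ℝ) := by
          have := horth (w - uh) (Uh.sub_mem hw huh)
          rwa [hTsub] at this
        have : ⟪T u - T uh, (T u - T w) + (T w - T uh)⟫ = ⟪T u - T uh, T u - T w⟫ := by
          rw [inner_add_right, h0, add_zero]
        rw [← this]
        congr 1
        abel
      calc ‖T u - T uh‖ * ‖T u - T uh‖ = ⟪T u - T uh, T u - T uh⟫ :=
            (real_inner_self_eq_norm_mul_norm _).symm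
        _ = ⟪T u - T uh, T u - T w⟫ := this
        _ ≤ ‖T u - T uh‖ * ‖T u - T w‖ := real_inner_le_norm _ _
    rcases eq_or_lt_of_le (norm_nonneg (T u - T uh)) with h | h
    · rw [← h]; exact norm_nonneg _
    · exact le_of_mul_le_mul_left hsq h
  -- conclude
  have h1 : c₁ * ‖u - uh‖ ≤ c₂ * ‖u - w‖ :=
    (hlowT (u - uh)).trans (hkey.trans (hupT (u - w)))
  rw [div_mul_eq_mul_div, le_div_iff₀ hc₁]
  linarith [h1]
end

section
/- Let U and V be real normed spaces and b : U × V → ℝ a bilinear form. Let U_h ⊆ U and V_h ⊆ V be linear subspaces and let Π : V → V be a linear map whose range is contained in V_h and which satisfies (a) b(w, v − Πv) = 0 for all w ∈ U_h and all v ∈ V, and (b) ‖Πv‖_V ≤ C_Π·‖v‖_V for all v ∈ V, for some constant C_Π > 0. If γ > 0 is such that γ·‖w‖_U ≤ sup_{v ∈ V, v ≠ 0} b(w,v)/‖v‖_V for all w ∈ U_h, then the discrete inf-sup condition (γ/C_Π)·‖w‖_U ≤ sup_{v ∈ V_h, v ≠ 0} b(w,v)/‖v‖_V holds for all w ∈ U_h.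 -/
/-- A Fortin operator transfers the continuous inf-sup condition to the
discrete test space: if `Pi_F : V → V_h` satisfies `b(w, v - Pi_F v) = 0` for all
`w ∈ U_h`, `v ∈ V`, and `‖Pi_F v‖ ≤ C_Π ‖v‖`, then the inf-sup constant `γ` over `V`
yields the discrete inf-sup constant `γ / C_Π` over `V_h`. -/
theorem stmt3
    {U V : Type*} [NormedAddCommGroup U] [NormedSpace ℝ U]
    [NormedAddCommGroup V] [NormedSpace ℝ V]
    (b : U →ₗ[ℝ] V →ₗ[ℝ] ℝ)
    (Uh : Submodule ℝ U) (Vh : Submodule ℝ V)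
    (Pi_F : V →ₗ[ℝ] V) (hrange : ∀ v : V, Pi_F v ∈ Vh)
    (horth : ∀ w ∈ Uh, ∀ v : V, b w (v - Pi_F v) = 0)
    (CPi : ℝ) (hCPi : 0 < CPi) (hbdd : ∀ v : V, ‖Pi_F v‖ ≤ CPi * ‖v‖)
    (γ : ℝ) (hγ : 0 < γ)
    (hinfsup : ∀ w ∈ Uh, γ * ‖w‖ ≤ ⨆ v : {v : V // v ≠ 0}, b w v / ‖(v : V)‖) :
    ∀ w ∈ Uh, (γ / CPi) * ‖w‖ ≤ ⨆ v : {v : V // v ∈ Vh ∧ v ≠ 0}, b w v / ‖(v : V)‖ := by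
  intro w hw
  -- b w v = b w (Pi_F v) for all v
  have hbe : ∀ v : V, b w v = b w (Pi_F v) := by
    intro v
    have := horth w hw v
    rw [map_sub] at this
    linarith
  by_cases hw0 : w = 0
  · subst hw0
    have h0 : (γ / CPi) * ‖(0 : U)‖ = 0 := by simp
    rw [h0]
    apply Real.iSup_nonneg
    intro v
    simp
  -- w ≠ 0
  set f : {v : V // v ≠ 0} → ℝ := fun v => b w v / ‖(v : V)‖ with hf
  set g : {v : V // v ∈ Vh ∧ v ≠ 0} → ℝ := fun v => b w v / ‖(v : V)‖ with hg
  have hwnorm : 0 < ‖w‖ := norm_pos_iff.mpr hw0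
  have hγw : 0 < γ * ‖w‖ := mul_pos hγ hwnorm
  have hbddf : BddAbove (Set.range f) := by
    by_contra hb
    have := hinfsup w hw
    rw [Real.iSup_of_not_bddAbove hb] at this
    linarith
  have hbddg : BddAbove (Set.range g) := by
    apply hbddf.mono
    rintro x ⟨v, rfl⟩
    exact ⟨⟨v.1, v.2.2⟩, rfl⟩
  -- Vh has a nonzero element (otherwise b w ≡ 0, contradicting inf-sup)
  have hne : ∃ v : V, v ∈ Vh ∧ v ≠ 0 := by
    by_contra hno
    push_neg at hno
    have hz : ∀ v : V, b w v = 0 := by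
      intro v
      rw [hbe v]
      have : Pi_F v = 0 := hno _ (hrange v)
      rw [this, map_zero]
    have hle0 : (⨆ v : {v : V // v ≠ 0}, b w v / ‖(v : V)‖) ≤ 0 := by
      apply Real.iSup_le _ le_rfl
      intro v
      rw [hz]; simp
    have := hinfsup w hw
    linarith
  haveI : Nonempty {v : V // v ∈ Vh ∧ v ≠ 0} := ⟨⟨hne.choose, hne.choose_spec⟩⟩
  set S : ℝ := ⨆ v : {v : V // v ∈ Vh ∧ v ≠ 0}, b w v / ‖(v : V)‖ with hS
  -- S ≥ 0 using v and -v
  have hS0 : 0 ≤ S := by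
    obtain ⟨v0, hv0, hv0'⟩ := hne
    have h1 : g ⟨v0, hv0, hv0'⟩ ≤ S := le_ciSup hbddg _
    have h2 : g ⟨-v0, Vh.neg_mem hv0, neg_ne_zero.mpr hv0'⟩ ≤ S := le_ciSup hbddg _
    have : g ⟨-v0, Vh.neg_mem hv0, neg_ne_zero.mpr hv0'⟩ = - g ⟨v0, hv0, hv0'⟩ := by
      simp [hg, neg_div]
    linarith
  have key : γ * ‖w‖ ≤ CPi * S := by
    refine le_trans (hinfsup w hw) (Real.iSup_le ?_ (by positivity))
    intro v
    obtain ⟨v, hv⟩ := v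
    by_cases hbv : b w v ≤ 0
    · have : b w v / ‖v‖ ≤ 0 := div_nonpos_of_nonpos_of_nonneg hbv (norm_nonneg v)
      have : (0:ℝ) ≤ CPi * S := by positivity
      simp only []
      linarith
    push_neg at hbv
    have hvpos : 0 < ‖v‖ := norm_pos_iff.mpr hv
    have heq : b w v = b w (Pi_F v) := hbe v
    have hPiv : Pi_F v ≠ 0 := by
      intro h
      rw [h, map_zero] at heq
      linarith
    have hPivpos : 0 < ‖Pi_F v‖ := norm_pos_iff.mpr hPiv
    have hstep : b w v / ‖v‖ ≤ CPi * (b w (Pi_F v) / ‖Pi_F v‖) := by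
      rw [heq]
      rw [div_le_iff₀ hvpos, mul_comm CPi _, div_mul_eq_mul_div,
        div_mul_eq_mul_div, le_div_iff₀ hPivpos]
      have h1 : ‖Pi_F v‖ ≤ CPi * ‖v‖ := hbdd v
      nlinarith
    have hmem : g ⟨Pi_F v, hrange v, hPiv⟩ ≤ S := le_ciSup hbddg _
    have : b w (Pi_F v) / ‖Pi_F v‖ ≤ S := hmem
    calc b w v / ‖v‖ ≤ CPi * (b w (Pi_F v) / ‖Pi_F v‖) := hstep
      _ ≤ CPi * S := by nlinarith
  rw [div_mul_eq_mul_div, div_le_iff₀ hCPi]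
  linarith [key]
end

section
/- Let U and V be real Hilbert spaces and b : U × V → ℝ a bilinear form with |b(u,v)| ≤ M·‖u‖·‖v‖ for all u, v and satisfying the inf-sup condition γ·‖w‖_U ≤ sup_{v ∈ V, v ≠ 0} b(w,v)/‖v‖_V for all w ∈ U, with constants M, γ > 0. Let U_h ⊆ U and V_h ⊆ V be finite-dimensional subspaces and let Π : V → V be a linear map with range in V_h such that b(w, v − Πv) = 0 for all w ∈ U_h, v ∈ V, and ‖Πv‖ ≤ C_Π·‖v‖ for all v ∈ V, where C_Π > 0. Define T_h : U → V_h by ⟨T_h w, v⟩_V = b(w,v) for all v ∈ V_h. Let L be a continuous linear functional on V and u ∈ U with b(u,v) = L(v) for all v ∈ V. Then there exists a unique u_h ∈ U_h satisfying b(u_h, T_h(δu)) = L(T_h(δu)) for all δu ∈ U_h, and it satisfies ‖u − u_h‖_U ≤ (1 + 2·M·C_Π/γ)·‖u − w‖_U for all w ∈ U_h. -/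
open RealInnerProductSpace

/-- Existence of a Fortin operator implies well-posedness and quasi-optimal
convergence of the fully discrete ("practical") DPG scheme (Gopalakrishnan–Qiu,
Theorem 2.1; Lemma 5 of the paper). `Th` is the discretized trial-to-test operator. -/
theorem stmt4
    {U V : Type*} [NormedAddCommGroup U] [InnerProductSpace ℝ U] [CompleteSpace U]
    [NormedAddCommGroup V] [InnerProductSpace ℝ V] [CompleteSpace V]
    (b : U →ₗ[ℝ] V →ₗ[ℝ] ℝ) (M γ : ℝ) (hM : 0 < M) (hγ : 0 < γ)
    (hbound : ∀ (u : U) (v : V), |b u v| ≤ M * ‖u‖ * ‖v‖)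
    (hinfsup : ∀ w : U, γ * ‖w‖ ≤ ⨆ v : {v : V // v ≠ 0}, b w v / ‖(v : V)‖)
    (Uh : Submodule ℝ U) (Vh : Submodule ℝ V)
    (hUh : FiniteDimensional ℝ Uh) (hVh : FiniteDimensional ℝ Vh)
    (Pi_F : V →ₗ[ℝ] V) (hrange : ∀ v : V, Pi_F v ∈ Vh)
    (horth : ∀ w ∈ Uh, ∀ v : V, b w (v - Pi_F v) = 0)
    (CPi : ℝ) (hCPi : 0 < CPi) (hbdd : ∀ v : V, ‖Pi_F v‖ ≤ CPi * ‖v‖)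
    (Th : U → V) (hThmem : ∀ w : U, Th w ∈ Vh)
    (hTh : ∀ w : U, ∀ v ∈ Vh, ⟪Th w, v⟫ = b w v)
    (L : V →L[ℝ] ℝ) (u : U) (hu : ∀ v : V, b u v = L v) :
    (∃! uh : U, uh ∈ Uh ∧ ∀ δu ∈ Uh, b uh (Th δu) = L (Th δu)) ∧
    (∀ uh ∈ Uh, (∀ δu ∈ Uh, b uh (Th δu) = L (Th δu)) →
      ∀ w ∈ Uh, ‖u - uh‖ ≤ (1 + 2 * M * CPi / γ) * ‖u - w‖) := by
  classical
  -- Elements of Vh with zero inner product against all of Vh vanish.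
  have hvanish : ∀ x ∈ Vh, (∀ v ∈ Vh, ⟪x, v⟫ = (0:ℝ)) → x = 0 := by
    intro x hx h
    exact inner_self_eq_zero.mp (h x hx)
  -- Linearity of Th.
  have hTh_add : ∀ w w' : U, Th (w + w') = Th w + Th w' := by
    intro w w'
    have h : Th (w + w') - (Th w + Th w') = 0 := by
      refine hvanish _ (by exact Vh.sub_mem (hThmem _) (Vh.add_mem (hThmem w) (hThmem w'))) ?_
      intro v hv
      rw [inner_sub_left, inner_add_left, hTh _ _ hv, hTh _ _ hv, hTh _ _ hv, map_add,
        LinearMap.add_apply]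
      ring
    exact sub_eq_zero.mp h
  have hTh_smul : ∀ (c : ℝ) (w : U), Th (c • w) = c • Th w := by
    intro c w
    have h : Th (c • w) - c • Th w = 0 := by
      refine hvanish _ (by exact Vh.sub_mem (hThmem _) (Vh.smul_mem c (hThmem w))) ?_
      intro v hv
      rw [inner_sub_left, real_inner_smul_left, hTh _ _ hv, hTh _ _ hv, map_smul,
        LinearMap.smul_apply, smul_eq_mul]
      ring
    exact sub_eq_zero.mp h
  have hTh_zero : Th 0 = 0 := by
    have := hTh_smul 0 0; simpa using this
  have hTh_sub : ∀ w w' : U, Th (w - w') = Th w - Th w' := by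
    intro w w'
    have := hTh_add (w - w') w'
    rw [sub_add_cancel] at this
    rw [this]; abel
  -- Discrete inf-sup: for w ∈ Uh, γ‖w‖ ≤ CPi‖Th w‖.
  have hdis : ∀ w ∈ Uh, γ * ‖w‖ ≤ CPi * ‖Th w‖ := by
    intro w hw
    refine (hinfsup w).trans (Real.iSup_le ?_ (by positivity))
    rintro ⟨v, hv⟩
    have hv' : (0:ℝ) < ‖v‖ := norm_pos_iff.mpr hv
    have heq : b w v = ⟪Th w, Pi_F v⟫ := by
      have h0 := horth w hw v
      rw [map_sub] at h0
      rw [hTh w _ (hrange v)]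
      linarith
    have h1 : ⟪Th w, Pi_F v⟫ ≤ ‖Th w‖ * ‖Pi_F v‖ := real_inner_le_norm _ _
    have h2 : ‖Pi_F v‖ ≤ CPi * ‖v‖ := hbdd v
    have h3 : (0:ℝ) ≤ ‖Th w‖ := norm_nonneg _
    rw [div_le_iff₀ hv', heq]
    nlinarith
  -- ‖Th d‖ bound via boundedness of b.
  have hThnorm : ∀ (x : U) (d : U), (∀ v ∈ Vh, ⟪Th d, v⟫ = b x v) → ‖Th d‖ ≤ M * ‖x‖ := by
    intro x d h
    have h1 : ‖Th d‖ ^ 2 = b x (Th d) := by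
      rw [← h (Th d) (hThmem d), real_inner_self_eq_norm_sq]
    have h2 : b x (Th d) ≤ M * ‖x‖ * ‖Th d‖ := (le_abs_self _).trans (hbound x (Th d))
    rcases eq_or_lt_of_le (norm_nonneg (Th d)) with h0 | h0
    · rw [← h0]; positivity
    · nlinarith
  -- The image submodule S = Th '' Uh.
  let S : Submodule ℝ V :=
    { carrier := {x | ∃ w ∈ Uh, Th w = x}
      add_mem' := by
        rintro x y ⟨w, hw, rfl⟩ ⟨w', hw', rfl⟩
        exact ⟨w + w', Uh.add_mem hw hw', hTh_add w w'⟩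
      zero_mem' := ⟨0, Uh.zero_mem, hTh_zero⟩
      smul_mem' := by
        rintro c x ⟨w, hw, rfl⟩
        exact ⟨c • w, Uh.smul_mem c hw, hTh_smul c w⟩ }
  have hSle : S ≤ Vh := by rintro x ⟨w, hw, rfl⟩; exact hThmem w
  haveI : FiniteDimensional ℝ S := Submodule.finiteDimensional_of_le hSle
  -- Riesz representation on S for L.
  let ℓ : S →L[ℝ] ℝ := L.comp (Submodule.subtypeL S)
  let p : S := (InnerProductSpace.toDual ℝ S).symm ℓ
  have hp : ∀ z : S, ⟪(p : V), (z : V)⟫ = L (z : V) := by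
    intro z
    have h := InnerProductSpace.toDual_symm_apply (𝕜 := ℝ) (E := S) (x := z) (y := ℓ)
    rw [Submodule.coe_inner] at h
    exact h
  have hpS : ∃ w ∈ Uh, Th w = (p : V) := p.2
  obtain ⟨uh, huh_mem, huh_eq⟩ := hpS
  have huh_sol : ∀ δu ∈ Uh, b uh (Th δu) = L (Th δu) := by
    intro δu hδu
    have hz : Th δu ∈ S := ⟨δu, hδu, rfl⟩
    have h := hp ⟨Th δu, hz⟩
    rw [← hTh uh _ (hThmem δu), huh_eq]
    exact h
  -- Uniqueness.
  have huniq : ∀ y : U, y ∈ Uh → (∀ δu ∈ Uh, b y (Th δu) = L (Th δu)) → y = uh := by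
    intro y hy hsol
    have hd : y - uh ∈ Uh := Uh.sub_mem hy huh_mem
    have hzero : b (y - uh) (Th (y - uh)) = 0 := by
      have h1 := hsol (y - uh) hd
      have h2 := huh_sol (y - uh) hd
      rw [map_sub, LinearMap.sub_apply]
      linarith
    have hThd : Th (y - uh) = 0 := by
      have := hTh (y - uh) _ (hThmem (y - uh))
      rw [hzero] at this
      exact inner_self_eq_zero.mp this
    have := hdis (y - uh) hd
    rw [hThd, norm_zero, mul_zero] at this
    have : ‖y - uh‖ ≤ 0 := by nlinarith
    have : y - uh = 0 := by
      rw [← norm_eq_zero]; exact le_antisymm this (norm_nonneg _)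
    exact sub_eq_zero.mp this
  constructor
  · exact ⟨uh, ⟨huh_mem, huh_sol⟩, fun y hy => huniq y hy.1 hy.2⟩
  · -- Quasi-optimality.
    intro uh' huh'mem hsol w hw
    have hd : uh' - w ∈ Uh := Uh.sub_mem huh'mem hw
    have hkey : ∀ v ∈ Vh, ⟪Th (uh' - w), v⟫ = b (u - w) v → True := fun _ _ _ => trivial
    have hgal : ∀ v ∈ Vh, ⟪Th (uh' - w), v⟫ = b (uh' - w) v := fun v hv => hTh _ v hv
    -- ‖Th (uh'-w)‖ ≤ M ‖u - w‖ :
    have hbnd : ‖Th (uh' - w)‖ ≤ M * ‖u - w‖ := by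
      have h1 : ‖Th (uh' - w)‖ ^ 2 = b (uh' - w) (Th (uh' - w)) := by
        rw [← hTh _ _ (hThmem (uh' - w)), real_inner_self_eq_norm_sq]
      have h2 : b (uh' - w) (Th (uh' - w)) = b (u - w) (Th (uh' - w)) := by
        have h3 := hsol (uh' - w) hd
        have h4 := hu (Th (uh' - w))
        rw [map_sub, map_sub, LinearMap.sub_apply, LinearMap.sub_apply]
        linarith
      have h5 : b (u - w) (Th (uh' - w)) ≤ M * ‖u - w‖ * ‖Th (uh' - w)‖ :=
        (le_abs_self _).trans (hbound _ _)
      rcases eq_or_lt_of_le (norm_nonneg (Th (uh' - w))) with h0 | h0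
      · rw [← h0]; positivity
      · nlinarith
    have h6 := hdis (uh' - w) hd
    have h7 : γ * ‖uh' - w‖ ≤ M * CPi * ‖u - w‖ := by
      nlinarith [hCPi.le]
    have h8 : ‖u - uh'‖ ≤ ‖u - w‖ + ‖uh' - w‖ := by
      have : u - uh' = (u - w) - (uh' - w) := by abel
      rw [this]
      exact norm_sub_le _ _
    have h9 : γ * ‖u - uh'‖ ≤ (γ + 2 * M * CPi) * ‖u - w‖ := by
      nlinarith [norm_nonneg (u - w), norm_nonneg (uh' - w), mul_pos hM hCPi]
    rw [show (1 + 2 * M * CPi / γ) = (γ + 2 * M * CPi) / γ by field_simp,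
      div_mul_eq_mul_div, le_div_iff₀ hγ]
    linarith
end

section
/- Let B be an invertible real 2×2 matrix, a ∈ ℝ², F(x̂) = B x̂ + a, and J := det B. Let Û ⊆ ℝ² be open and let M̂ : Û → ℝ^{2×2} be twice continuously differentiable. Define the Piola–Kirchhoff transform M on F(Û) by M(F(x̂)) := |J|⁻¹ B M̂(x̂) Bᵀ. Then for every x̂ ∈ Û, |J| · (div Div M)(F(x̂)) = (div Div M̂)(x̂). -/
/-!
Write `F y = e y + a`, where `e` is the linear equivalence `v ↦ B v`. Near `F x̂`, each
entry `M_ij` is `|J|⁻¹ Σ_kl B_ik B_jl M̂_kl` composed with the inverse affine map `F⁻¹`, so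
the chain rule gives
`∂_i ∂_j M_ij (F x̂) = |J|⁻¹ Σ_kl B_ik B_jl D²M̂_kl(x̂)(B⁻¹ e_i, B⁻¹ e_j)`.
Summing over `i, j`, bilinearity and `Σ_i B_ik B⁻¹ e_i = e_k` collapse this to
`|J|⁻¹ Σ_kl D²M̂_kl(x̂)(e_k, e_l) = |J|⁻¹ (div Div M̂)(x̂)`.
-/

/-- The `i`-th partial derivative of a scalar field on `ℝ²`. -/
noncomputable def pd (i : Fin 2) (f : (Fin 2 → ℝ) → ℝ) (x : Fin 2 → ℝ) : ℝ :=
  fderiv ℝ f x (Pi.single i 1)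

/-- The twice iterated divergence `div Div N = Σ_{i,j} ∂_i ∂_j N_{ij}` of a matrix field. -/
noncomputable def divDiv (N : (Fin 2 → ℝ) → Matrix (Fin 2) (Fin 2) ℝ) (x : Fin 2 → ℝ) : ℝ :=
  ∑ i : Fin 2, ∑ j : Fin 2, pd i (pd j (fun y => N y i j)) x

open Topology

section Calculus

variable {𝕜 : Type*} [NontriviallyNormedField 𝕜]
  {E E' F : Type*} [NormedAddCommGroup E] [NormedSpace 𝕜 E] [NormedAddCommGroup E']
  [NormedSpace 𝕜 E'] [NormedAddCommGroup F] [NormedSpace 𝕜 F]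

theorem ContDiffAt.differentiableAt_fderiv {f : E → F} {x : E} (hf : ContDiffAt 𝕜 2 f x) :
    DifferentiableAt 𝕜 (fderiv 𝕜 f) x :=
  (hf.fderiv_right (m := 1) le_rfl).differentiableAt one_ne_zero

theorem iteratedFDeriv_comp_continuousLinearEquiv_add (e : E ≃L[𝕜] E') (b : E') (f : E' → F)
    (n : ℕ) (x : E) :
    iteratedFDeriv 𝕜 n (fun y => f (e y + b)) x =
      (iteratedFDeriv 𝕜 n f (e x + b)).compContinuousLinearMap fun _ => (e : E →L[𝕜] E') := by
  have h := e.iteratedFDerivWithin_comp_right (fun z => f (z + b)) uniqueDiffOn_univ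
    (Set.mem_univ (e x)) n
  simp only [Set.preimage_univ, iteratedFDerivWithin_univ] at h
  rw [← iteratedFDeriv_comp_add_right]
  exact h

theorem fderiv_fderiv_comp_continuousLinearEquiv_add (e : E ≃L[𝕜] E') (b : E') (f : E' → F)
    (x u v : E) :
    fderiv 𝕜 (fderiv 𝕜 fun y => f (e y + b)) x u v =
      fderiv 𝕜 (fderiv 𝕜 f) (e x + b) (e u) (e v) := by
  simpa [iteratedFDeriv_two_apply] using
    congr($(iteratedFDeriv_comp_continuousLinearEquiv_add e b f 2 x) ![u, v])

theorem fderiv_fderiv_sum_smul_apply {ι : Type*} (s : Finset ι) (w : ι → 𝕜) {f : ι → E → F}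
    {x : E} (hf : ∀ k ∈ s, ContDiffAt 𝕜 2 (f k) x) (u v : E) :
    fderiv 𝕜 (fderiv 𝕜 fun y => ∑ k ∈ s, w k • f k y) x u v =
      ∑ k ∈ s, w k • fderiv 𝕜 (fderiv 𝕜 (f k)) x u v := by
  have hessian (g : E → F) : fderiv 𝕜 (fderiv 𝕜 g) x u v = iteratedFDeriv 𝕜 2 g x ![u, v] :=
    (iteratedFDeriv_two_apply g x ![u, v]).symm
  simp only [hessian, iteratedFDeriv_fun_sum_apply fun k hk => (hf k hk).const_smul (w k),
    sum_apply]
  exact Finset.sum_congr rfl fun k hk => by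
    rw [iteratedFDeriv_const_smul_apply' (hf k hk), smul_apply]

end Calculus

open scoped Matrix

theorem Matrix.smul_mul_mul_transpose_apply {ι R : Type*} [Fintype ι] [CommRing R] (c : R)
    (B N : Matrix ι ι R) (i j : ι) :
    (c • (B * N * Bᵀ)) i j = ∑ p : ι × ι, (c * B i p.1 * B j p.2) * N p.1 p.2 := by
  simp only [Matrix.smul_apply, Matrix.mul_apply, Matrix.transpose_apply, Finset.sum_mul,
    Fintype.sum_prod_type, Finset.mul_sum, smul_eq_mul]
  rw [Finset.sum_comm]
  refine Finset.sum_congr rfl fun k _ => Finset.sum_congr rfl fun l _ => by ring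

section ChangeOfBasis

variable {ι 𝕜 : Type*} [Fintype ι] [DecidableEq ι] [NontriviallyNormedField 𝕜]
  {B : Matrix ι ι 𝕜} {e : (ι → 𝕜) ≃L[𝕜] (ι → 𝕜)}

theorem Matrix.exists_continuousLinearEquiv_mulVec [CompleteSpace 𝕜] (hB : IsUnit B.det) :
    ∃ e : (ι → 𝕜) ≃L[𝕜] (ι → 𝕜), ∀ v, e v = B *ᵥ v :=
  ⟨(B.toLinearEquiv' (B.invertibleOfIsUnitDet hB)).toContinuousLinearEquiv, fun _ => rfl⟩

theorem Matrix.sum_smul_symm_single (he : ∀ v, e v = B *ᵥ v) (k : ι) :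
    ∑ i, B i k • e.symm (Pi.single i 1) = Pi.single k 1 := by
  calc ∑ i, B i k • e.symm (Pi.single i 1) = e.symm (∑ i, B i k • Pi.single i 1) := by
        simp only [map_sum, map_smul]
    _ = e.symm (e (Pi.single k 1)) := by
        rw [he, Matrix.mulVec_single_one]
        congr 1
        ext i
        simp [Finset.sum_apply, Pi.single_apply]
    _ = Pi.single k 1 := e.symm_apply_apply _

theorem Matrix.sum_sum_mul_mul_apply_symm_single (he : ∀ v, e v = B *ᵥ v)
    (H : (ι → 𝕜) →L[𝕜] (ι → 𝕜) →L[𝕜] 𝕜) (k l : ι) :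
    ∑ i, ∑ j, B i k * B j l * H (e.symm (Pi.single i 1)) (e.symm (Pi.single j 1)) =
      H (Pi.single k 1) (Pi.single l 1) := by
  rw [← B.sum_smul_symm_single he k, ← B.sum_smul_symm_single he l]
  simp only [map_sum, map_smul, _root_.sum_apply, _root_.smul_apply, smul_eq_mul, Finset.mul_sum]
  rw [Finset.sum_comm]
  refine Finset.sum_congr rfl fun i _ => Finset.sum_congr rfl fun j _ => by ring

theorem Matrix.sum_sum_sum_mul_mul_apply_symm_single (he : ∀ v, e v = B *ᵥ v)
    (H : ι × ι → (ι → 𝕜) →L[𝕜] (ι → 𝕜) →L[𝕜] 𝕜) :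
    ∑ i, ∑ j, ∑ p, B i p.1 * B j p.2 * H p (e.symm (Pi.single i 1)) (e.symm (Pi.single j 1)) =
      ∑ p, H p (Pi.single p.1 1) (Pi.single p.2 1) := by
  conv_lhs => enter [2, i]; rw [Finset.sum_comm]
  rw [Finset.sum_comm]
  exact Finset.sum_congr rfl fun p _ => B.sum_sum_mul_mul_apply_symm_single he (H p) p.1 p.2

end ChangeOfBasis

theorem pd_pd_eq_fderiv_fderiv {f : (Fin 2 → ℝ) → ℝ} {x : Fin 2 → ℝ}
    (hf : DifferentiableAt ℝ (fderiv ℝ f) x) (i j : Fin 2) :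
    pd i (pd j f) x = fderiv ℝ (fderiv ℝ f) x (Pi.single i 1) (Pi.single j 1) := by
  unfold pd
  rw [fderiv_clm_apply hf (differentiableAt_const _)]
  simp

theorem divDiv_eq_sum_fderiv_fderiv {N : (Fin 2 → ℝ) → Matrix (Fin 2) (Fin 2) ℝ} {x : Fin 2 → ℝ}
    (hN : ∀ i j, DifferentiableAt ℝ (fderiv ℝ fun y => N y i j) x) :
    divDiv N x = ∑ p : Fin 2 × Fin 2,
      fderiv ℝ (fderiv ℝ fun y => N y p.1 p.2) x (Pi.single p.1 1) (Pi.single p.2 1) := by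
  simp only [divDiv, Fintype.sum_prod_type, pd_pd_eq_fderiv_fderiv (hN _ _)]

theorem pd_pd_apply_add_eq_fderiv_fderiv_comp (e : (Fin 2 → ℝ) ≃L[ℝ] (Fin 2 → ℝ))
    (a : Fin 2 → ℝ) {m : (Fin 2 → ℝ) → ℝ} {x : Fin 2 → ℝ}
    (hm : ContDiffAt ℝ 2 (fun y => m (e y + a)) x) (i j : Fin 2) :
    pd i (pd j m) (e x + a) = fderiv ℝ (fderiv ℝ fun y => m (e y + a)) x
      (e.symm (Pi.single i 1)) (e.symm (Pi.single j 1)) := by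
  have hm_eq : m = fun z => (fun y => m (e y + a)) (e.symm z + -e.symm a) := by
    funext z
    simp
  have hx : e.symm (e x + a) + -e.symm a = x := by simp
  have hm_smooth : ContDiffAt ℝ 2 m (e x + a) := by
    rw [hm_eq]
    refine ContDiffAt.comp (g := fun y => m (e y + a)) _ ?_
      (e.symm.contDiff.add contDiff_const).contDiffAt
    rwa [hx]
  have hchange := fderiv_fderiv_comp_continuousLinearEquiv_add e.symm (-e.symm a)
    (fun y => m (e y + a)) (e x + a) (Pi.single i 1) (Pi.single j 1)
  rw [hx, ← hm_eq] at hchange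
  rw [pd_pd_eq_fderiv_fderiv hm_smooth.differentiableAt_fderiv, hchange]

theorem pd_pd_of_comp_eq_smul_mul_mul_transpose (e : (Fin 2 → ℝ) ≃L[ℝ] (Fin 2 → ℝ))
    (a : Fin 2 → ℝ) (B : Matrix (Fin 2) (Fin 2) ℝ) (c : ℝ)
    {Mhat M : (Fin 2 → ℝ) → Matrix (Fin 2) (Fin 2) ℝ} {x : Fin 2 → ℝ}
    (hMhat : ∀ k l, ContDiffAt ℝ 2 (fun y => Mhat y k l) x)
    (hM : ∀ᶠ y in 𝓝 x, M (e y + a) = c • (B * Mhat y * Bᵀ)) (i j : Fin 2) :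
    pd i (pd j fun y => M y i j) (e x + a) = c * ∑ p : Fin 2 × Fin 2, B i p.1 * B j p.2 *
      fderiv ℝ (fderiv ℝ fun y => Mhat y p.1 p.2) x (e.symm (Pi.single i 1))
        (e.symm (Pi.single j 1)) := by
  have hloc : (fun y => M (e y + a) i j) =ᶠ[𝓝 x]
      fun y => ∑ p : Fin 2 × Fin 2, (c * B i p.1 * B j p.2) • Mhat y p.1 p.2 :=
    hM.mono fun y hy => by simp only [hy, Matrix.smul_mul_mul_transpose_apply, smul_eq_mul]
  have hMhat' (p : Fin 2 × Fin 2) : ContDiffAt ℝ 2 (fun y => Mhat y p.1 p.2) x := hMhat p.1 p.2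
  rw [pd_pd_apply_add_eq_fderiv_fderiv_comp e a
      ((ContDiffAt.sum fun p _ => (hMhat' p).const_smul _).congr_of_eventuallyEq hloc),
    hloc.fderiv.fderiv_eq, fderiv_fderiv_sum_smul_apply _ _ fun p _ => hMhat' p, Finset.mul_sum]
  simp only [smul_eq_mul, mul_assoc]

/-- The Piola–Kirchhoff transformation `M(F x̂) = |J|⁻¹ B M̂(x̂) Bᵀ`
satisfies `|J| (div Div M)(F x̂) = (div Div M̂)(x̂)` (Lemma 8, first identity, smooth case).
Here `Mhat` plays the role of `M̂`, `Uhat` of `Û` and `xhat` of `x̂`. -/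
theorem stmt5
    (B : Matrix (Fin 2) (Fin 2) ℝ) (hB : IsUnit B.det) (a : Fin 2 → ℝ)
    (F : (Fin 2 → ℝ) → (Fin 2 → ℝ)) (hF : ∀ xhat, F xhat = B.mulVec xhat + a)
    (Uhat : Set (Fin 2 → ℝ)) (hUhat : IsOpen Uhat)
    (Mhat M : (Fin 2 → ℝ) → Matrix (Fin 2) (Fin 2) ℝ)
    (hsmooth : ∀ i j : Fin 2, ContDiffOn ℝ 2 (fun x => Mhat x i j) Uhat)
    (hM : ∀ xhat ∈ Uhat, M (F xhat) = |B.det|⁻¹ • (B * Mhat xhat * B.transpose)) :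
    ∀ xhat ∈ Uhat, |B.det| * divDiv M (F xhat) = divDiv Mhat xhat := by
  intro x hx
  obtain ⟨e, he⟩ := Matrix.exists_continuousLinearEquiv_mulVec hB
  obtain rfl : F = fun y => e y + a := funext fun y => by rw [hF, he]
  have hMhat (k l : Fin 2) : ContDiffAt ℝ 2 (fun y => Mhat y k l) x :=
    (hsmooth k l).contDiffAt (hUhat.mem_nhds hx)
  have hM_near : ∀ᶠ y in 𝓝 x, M (e y + a) = |B.det|⁻¹ • (B * Mhat y * Bᵀ) :=
    Filter.eventually_of_mem (hUhat.mem_nhds hx) hM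
  simp only [divDiv, pd_pd_of_comp_eq_smul_mul_mul_transpose e a B _ hMhat hM_near,
    ← Finset.mul_sum, B.sum_sum_sum_mul_mul_apply_symm_single he,
    ← divDiv_eq_sum_fderiv_fderiv fun k l => (hMhat k l).differentiableAt_fderiv]
  exact mul_inv_cancel_left₀ (abs_ne_zero.mpr hB.ne_zero) _
end

section
/- Let B be an invertible real 2×2 matrix, a ∈ ℝ², F(x̂) = B x̂ + a, and J := det B. Let Û ⊆ ℝ² be open, let ẑ : Û → ℝ be twice continuously differentiable, and set z := ẑ ∘ F⁻¹ on F(Û). Let M̂ : Û → ℝ^{2×2} be any matrix field with Piola–Kirchhoff transform M, i.e. M(F(x̂)) := |J|⁻¹ B M̂(x̂) Bᵀ. Then for every x̂ ∈ Û, |J| · (∇∇z(F(x̂)) : M(F(x̂))) = ∇∇ẑ(x̂) : M̂(x̂). -/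
/-- The Hessian `∇∇z = (∂_i ∂_j z)_{ij}` of a scalar field. -/
noncomputable def hessian (f : (Fin 2 → ℝ) → ℝ) (x : Fin 2 → ℝ) :
    Matrix (Fin 2) (Fin 2) ℝ :=
  Matrix.of fun i j => pd i (pd j f) x

/-- Frobenius inner product `A : C = Σ_{i,j} A_{ij} C_{ij}` of 2×2 matrices. -/
def frob (A C : Matrix (Fin 2) (Fin 2) ℝ) : ℝ :=
  ∑ i : Fin 2, ∑ j : Fin 2, A i j * C i j

/-!
Near `F x̂` the field `z` coincides with `ẑ ∘ F⁻¹`, and `F⁻¹ y = B⁻¹ y - B⁻¹ a` is affine, so the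
chain rule gives `∇∇z(F x̂) = B⁻ᵀ ∇∇ẑ(x̂) B⁻¹`. Since `(Pᵀ A Q) : C = A : (P C Qᵀ)`, the factors
`B⁻ᵀ, B⁻¹` move onto `M(F x̂) = |J|⁻¹ B M̂(x̂) Bᵀ`, where they cancel `B, Bᵀ`.
-/

open Matrix Filter Topology

lemma pd_congr {f g : (Fin 2 → ℝ) → ℝ} {x : Fin 2 → ℝ} (h : f =ᶠ[𝓝 x] g) (i : Fin 2) :
    pd i f x = pd i g x := by
  rw [pd, pd, h.fderiv_eq]

lemma hessian_congr {f g : (Fin 2 → ℝ) → ℝ} {x : Fin 2 → ℝ} (h : f =ᶠ[𝓝 x] g) :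
    hessian f x = hessian g x := by
  ext i j
  exact pd_congr (h.eventuallyEq_nhds.mono fun y hy => pd_congr hy j) i

lemma pd_fun_sum_const_mul {g : Fin 2 → (Fin 2 → ℝ) → ℝ} {x : Fin 2 → ℝ}
    (hg : ∀ m, DifferentiableAt ℝ (g m) x) (w : Fin 2 → ℝ) (i : Fin 2) :
    pd i (fun x => ∑ m, w m * g m x) x = ∑ m, w m * pd i (g m) x := by
  rw [pd, fderiv_fun_sum fun m _ => (hg m).const_mul (w m)]
  simp only [FunLike.coe_sum, Finset.sum_apply, fderiv_const_mul (hg _)]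
  rfl

lemma pd_comp_affine (C : Matrix (Fin 2) (Fin 2) ℝ) (c : Fin 2 → ℝ) {f : (Fin 2 → ℝ) → ℝ}
    {y : Fin 2 → ℝ} (hf : DifferentiableAt ℝ f (C *ᵥ y + c)) (j : Fin 2) :
    pd j (fun y => f (C *ᵥ y + c)) y = ∑ m, C m j * pd m f (C *ᵥ y + c) := by
  have hC : HasFDerivAt (fun y => C *ᵥ y + c) C.mulVecLin.toContinuousLinearMap y :=
    C.mulVecLin.toContinuousLinearMap.hasFDerivAt.add_const c
  have hcol : C *ᵥ Pi.single j 1 = ∑ m, C m j • Pi.single m 1 := by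
    ext k; simp [Pi.single_apply]
  have hfC : HasFDerivAt (fun y => f (C *ᵥ y + c))
      ((fderiv ℝ f (C *ᵥ y + c)).comp C.mulVecLin.toContinuousLinearMap) y :=
    hf.hasFDerivAt.comp y hC
  rw [pd, hfC.fderiv]
  simp [hcol, pd]

lemma differentiableAt_pd {f : (Fin 2 → ℝ) → ℝ} {x : Fin 2 → ℝ} (hf : ContDiffAt ℝ 2 f x)
    (m : Fin 2) : DifferentiableAt ℝ (pd m f) x :=
  ((hf.fderiv_right (m := 1) (by norm_num)).differentiableAt (by norm_num)).clm_apply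
    (differentiableAt_const _)

lemma hessian_comp_affine (C : Matrix (Fin 2) (Fin 2) ℝ) (c : Fin 2 → ℝ) {f : (Fin 2 → ℝ) → ℝ}
    {y : Fin 2 → ℝ} (hf : ContDiffAt ℝ 2 f (C *ᵥ y + c)) :
    hessian (fun y => f (C *ᵥ y + c)) y = Cᵀ * hessian f (C *ᵥ y + c) * C := by
  have hG : Continuous fun y : Fin 2 → ℝ => C *ᵥ y + c := by fun_prop
  have hfd : ∀ᶠ y' in 𝓝 y, DifferentiableAt ℝ f (C *ᵥ y' + c) :=
    hG.continuousAt.eventually ((hf.eventually (by simp)).mono fun x hx =>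
      hx.differentiableAt (by norm_num))
  have hpd : ∀ j, pd j (fun y => f (C *ᵥ y + c)) =ᶠ[𝓝 y]
      fun y => ∑ m, C m j * pd m f (C *ᵥ y + c) := fun j =>
    hfd.mono fun y' hy' => pd_comp_affine C c hy' j
  ext i j
  have hpdf := differentiableAt_pd hf
  have hsum : DifferentiableAt ℝ (fun x => ∑ m, C m j * pd m f x) (C *ᵥ y + c) := by
    fun_prop
  rw [hessian, of_apply, pd_congr (hpd j) i, pd_comp_affine C c hsum i]
  simp only [pd_fun_sum_const_mul hpdf]
  simp only [hessian, of_apply, mul_apply, transpose_apply, Fin.sum_univ_two]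
  ring

lemma frob_eq_trace (A C : Matrix (Fin 2) (Fin 2) ℝ) : frob A C = trace (A * Cᵀ) := by
  simp [frob, trace, mul_apply, Fin.sum_univ_two]

lemma frob_smul_right (A C : Matrix (Fin 2) (Fin 2) ℝ) (r : ℝ) :
    frob A (r • C) = r * frob A C := by
  simp [frob_eq_trace]

lemma frob_transpose_mul_mul (P A Q C : Matrix (Fin 2) (Fin 2) ℝ) :
    frob (Pᵀ * A * Q) C = frob A (P * C * Qᵀ) := by
  rw [frob_eq_trace, frob_eq_trace, transpose_mul, transpose_mul, transpose_transpose,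
    Matrix.mul_assoc, Matrix.mul_assoc, trace_mul_comm]
  simp only [Matrix.mul_assoc]

/-- For `z = ẑ ∘ F⁻¹` and the Piola–Kirchhoff transform `M` of `M̂`,
`|J| (∇∇z(F x̂) : M(F x̂)) = ∇∇ẑ(x̂) : M̂(x̂)` (Lemma 8, second identity, smooth case).
Here `zhat` plays the role of `ẑ`, `Mhat` of `M̂`, `Uhat` of `Û`, `xhat` of `x̂`. -/
theorem stmt6
    (B : Matrix (Fin 2) (Fin 2) ℝ) (hB : IsUnit B.det) (a : Fin 2 → ℝ)
    (F : (Fin 2 → ℝ) → (Fin 2 → ℝ)) (hF : ∀ xhat, F xhat = B.mulVec xhat + a)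
    (Uhat : Set (Fin 2 → ℝ)) (hUhat : IsOpen Uhat)
    (zhat z : (Fin 2 → ℝ) → ℝ)
    (hzhat : ContDiffOn ℝ 2 zhat Uhat)
    (hz : ∀ xhat ∈ Uhat, z (F xhat) = zhat xhat)
    (Mhat M : (Fin 2 → ℝ) → Matrix (Fin 2) (Fin 2) ℝ)
    (hM : ∀ xhat ∈ Uhat, M (F xhat) = |B.det|⁻¹ • (B * Mhat xhat * B.transpose)) :
    ∀ xhat ∈ Uhat,
      |B.det| * frob (hessian z (F xhat)) (M (F xhat))
        = frob (hessian zhat xhat) (Mhat xhat) := by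
  intro xhat hx
  set c := -(B⁻¹ *ᵥ a) with hc
  have hFG : ∀ y, F (B⁻¹ *ᵥ y + c) = y := fun y => by
    rw [hF, hc, mulVec_add, mulVec_neg, mulVec_mulVec, mulVec_mulVec, mul_nonsing_inv B hB,
      one_mulVec, one_mulVec, neg_add_cancel_right]
  have hGF : B⁻¹ *ᵥ F xhat + c = xhat := by
    rw [hF, hc, mulVec_add, mulVec_mulVec, nonsing_inv_mul B hB, one_mulVec,
      add_neg_cancel_right]
  have hzG : z =ᶠ[𝓝 (F xhat)] fun y => zhat (B⁻¹ *ᵥ y + c) := by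
    have hG : Continuous fun y : Fin 2 → ℝ => B⁻¹ *ᵥ y + c := by fun_prop
    have hU : ∀ᶠ y in 𝓝 (F xhat), B⁻¹ *ᵥ y + c ∈ Uhat :=
      hG.continuousAt.preimage_mem_nhds (by rw [hGF]; exact hUhat.mem_nhds hx)
    filter_upwards [hU] with y hy
    rw [← hz _ hy, hFG]
  have hH : hessian z (F xhat) = B⁻¹ᵀ * hessian zhat xhat * B⁻¹ := by
    have hzhat_at : ContDiffAt ℝ 2 zhat (B⁻¹ *ᵥ F xhat + c) := by
      rw [hGF]; exact hzhat.contDiffAt (hUhat.mem_nhds hx)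
    rw [hessian_congr hzG, hessian_comp_affine B⁻¹ c hzhat_at, hGF]
  have hdet : |B.det| ≠ 0 := abs_ne_zero.mpr hB.ne_zero
  rw [hH, hM xhat hx, frob_smul_right, frob_transpose_mul_mul, ← mul_assoc,
    mul_inv_cancel₀ hdet, one_mul, transpose_nonsing_inv, Matrix.mul_assoc B,
    nonsing_inv_mul_cancel_left (h := hB),
    mul_nonsing_inv_cancel_right (h := by rwa [det_transpose])]
end

section
/- Let B be an invertible real 2×2 matrix, a ∈ ℝ², F(x̂) = B x̂ + a, and J := det B. Let Û ⊆ ℝ² be open. Let Ξ̂ : Û → ℝ^{2×2} be continuously differentiable with Piola–Kirchhoff transform Ξ (Ξ(F(x̂)) := |J|⁻¹ B Ξ̂(x̂) Bᵀ), and let τ̂ : Û → ℝ² have Piola transform τ (τ(F(x̂)) := |J|⁻¹ B τ̂(x̂)). Then for every x̂ ∈ Û, |J| · ((Div Ξ)(F(x̂)) − τ(F(x̂))) = B · ((Div Ξ̂)(x̂) − τ̂(x̂)). -/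
/-- The row-wise divergence `(Div N)_i = Σ_j ∂_j N_{ij}` of a matrix field. -/
noncomputable def DivMat (N : (Fin 2 → ℝ) → Matrix (Fin 2) (Fin 2) ℝ)
    (x : Fin 2 → ℝ) : Fin 2 → ℝ :=
  fun i => ∑ j : Fin 2, pd j (fun y => N y i j) x

open Matrix Filter Topology

theorem LinearMap.trace_eq_sum_apply_single {R n : Type*} [CommRing R] [Fintype n]
    [DecidableEq n] (f : (n → R) →ₗ[R] n → R) :
    LinearMap.trace R _ f = ∑ j, f (Pi.single j 1) j := by
  rw [LinearMap.trace_eq_matrix_trace R (Pi.basisFun R n), LinearMap.toMatrix_eq_toMatrix']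
  simp [Matrix.trace, LinearMap.toMatrix'_apply]

theorem LinearMap.trace_mulVecLin_comp_comp_mulVecLin {R n : Type*} [CommRing R] [Fintype n]
    [DecidableEq n] {B C : Matrix n n R} (hCB : C * B = 1) (f : (n → R) →ₗ[R] n → R) :
    LinearMap.trace R _ (B.mulVecLin ∘ₗ f ∘ₗ C.mulVecLin) = LinearMap.trace R _ f := by
  rw [LinearMap.trace_comp_comm', LinearMap.comp_assoc, ← Matrix.mulVecLin_mul, hCB,
    Matrix.mulVecLin_one, LinearMap.comp_id]

theorem sum_pd_eq_trace_fderiv {w : (Fin 2 → ℝ) → Fin 2 → ℝ} {x : Fin 2 → ℝ}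
    (hw : DifferentiableAt ℝ w x) :
    ∑ j, pd j (fun y => w y j) x = LinearMap.trace ℝ _ (fderiv ℝ w x : (Fin 2 → ℝ) →ₗ[ℝ] _) := by
  simp [LinearMap.trace_eq_sum_apply_single, pd, fderiv_apply hw]

theorem sum_pd_mulVec_comp_affine {B C : Matrix (Fin 2) (Fin 2) ℝ} (hCB : C * B = 1) (a : Fin 2 → ℝ)
    {w : (Fin 2 → ℝ) → Fin 2 → ℝ} {x : Fin 2 → ℝ} (hw : DifferentiableAt ℝ w x) :
    ∑ j, pd j (fun y => (B *ᵥ w (C *ᵥ (y - a))) j) (B *ᵥ x + a)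
      = ∑ j, pd j (fun y => w y j) x := by
  set LB := LinearMap.toContinuousLinearMap B.mulVecLin
  set LC := LinearMap.toContinuousLinearMap C.mulVecLin
  have hx : C *ᵥ (B *ᵥ x + a - a) = x := by
    rw [add_sub_cancel_right, mulVec_mulVec, hCB, one_mulVec]
  have hG : HasFDerivAt (fun y => C *ᵥ (y - a)) LC (B *ᵥ x + a) :=
    LC.hasFDerivAt.comp _ ((hasFDerivAt_id _).sub_const a) |>.congr_fderiv (by simp)
  have hcomp : HasFDerivAt (fun y => B *ᵥ w (C *ᵥ (y - a))) (LB.comp ((fderiv ℝ w x).comp LC))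
      (B *ᵥ x + a) :=
    LB.hasFDerivAt.comp _ (HasFDerivAt.comp _ (hx.symm ▸ hw.hasFDerivAt) hG)
  rw [sum_pd_eq_trace_fderiv hcomp.differentiableAt, sum_pd_eq_trace_fderiv hw, hcomp.fderiv]
  exact LinearMap.trace_mulVecLin_comp_comp_mulVecLin hCB _

theorem DivMat_congr {N M : (Fin 2 → ℝ) → Matrix (Fin 2) (Fin 2) ℝ} {x : Fin 2 → ℝ}
    (h : N =ᶠ[𝓝 x] M) : DivMat N x = DivMat M x := by
  funext i
  refine Finset.sum_congr rfl fun j _ => ?_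
  have hij : (fun y => N y i j) =ᶠ[𝓝 x] fun y => M y i j := h.mono fun y hy => by simp only [hy]
  rw [pd, pd, hij.fderiv_eq]

theorem DivMat_comp_affine_mul_transpose {B C : Matrix (Fin 2) (Fin 2) ℝ} (hCB : C * B = 1)
    (a : Fin 2 → ℝ) {N : (Fin 2 → ℝ) → Matrix (Fin 2) (Fin 2) ℝ} {x : Fin 2 → ℝ}
    (hN : ∀ i j, DifferentiableAt ℝ (fun y => N y i j) x) :
    DivMat (fun y => N (C *ᵥ (y - a)) * Bᵀ) (B *ᵥ x + a) = DivMat N x := by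
  funext i
  have hrow : ∀ M : Matrix (Fin 2) (Fin 2) ℝ, (M * Bᵀ) i = B *ᵥ M i := fun M => by
    ext j; simp [Matrix.mul_apply, Matrix.mulVec, dotProduct, mul_comm]
  simp only [DivMat, hrow]
  exact sum_pd_mulVec_comp_affine hCB a (differentiableAt_pi.2 (hN i))

theorem differentiableAt_mul_apply (A : Matrix (Fin 2) (Fin 2) ℝ)
    {N : (Fin 2 → ℝ) → Matrix (Fin 2) (Fin 2) ℝ} {x : Fin 2 → ℝ}
    (hN : ∀ i j, DifferentiableAt ℝ (fun y => N y i j) x) (i j : Fin 2) :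
    DifferentiableAt ℝ (fun y => (A * N y) i j) x := by
  simp only [Matrix.mul_apply]
  fun_prop

theorem DivMat_mul_left (A : Matrix (Fin 2) (Fin 2) ℝ)
    {N : (Fin 2 → ℝ) → Matrix (Fin 2) (Fin 2) ℝ} {x : Fin 2 → ℝ}
    (hN : ∀ i j, DifferentiableAt ℝ (fun y => N y i j) x) :
    DivMat (fun y => A * N y) x = A *ᵥ DivMat N x := by
  funext i
  have hpd : ∀ j, pd j (fun y => (A * N y) i j) x = ∑ k, A i k * pd j (fun y => N y k j) x :=
    fun j => by
      simp only [pd, Matrix.mul_apply]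
      rw [fderiv_fun_sum fun k _ => (hN k j).const_mul (A i k)]
      simp [fderiv_const_mul (hN _ j)]
  simp only [DivMat, hpd, Matrix.mulVec, dotProduct, Finset.mul_sum]
  exact Finset.sum_comm

/-- For the Piola–Kirchhoff transform `Ξ` of `Ξ̂` and the Piola transform
`τ` of `τ̂`, one has `|J| ((Div Ξ)(F x̂) − τ(F x̂)) = B ((Div Ξ̂)(x̂) − τ̂(x̂))`
(Lemma 9, first transformation relation, smooth case).
Here `Xihat` plays the role of `Ξ̂`, `tauhat` of `τ̂`, `Uhat` of `Û`, `xhat` of `x̂`. -/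
theorem stmt8
    (B : Matrix (Fin 2) (Fin 2) ℝ) (hB : IsUnit B.det) (a : Fin 2 → ℝ)
    (F : (Fin 2 → ℝ) → (Fin 2 → ℝ)) (hF : ∀ xhat, F xhat = B.mulVec xhat + a)
    (Uhat : Set (Fin 2 → ℝ)) (hUhat : IsOpen Uhat)
    (Xihat Ξ : (Fin 2 → ℝ) → Matrix (Fin 2) (Fin 2) ℝ)
    (hsmooth : ∀ i j : Fin 2, ContDiffOn ℝ 1 (fun x => Xihat x i j) Uhat)
    (hXi : ∀ xhat ∈ Uhat, Ξ (F xhat) = |B.det|⁻¹ • (B * Xihat xhat * B.transpose))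
    (tauhat τ : (Fin 2 → ℝ) → (Fin 2 → ℝ))
    (htau : ∀ xhat ∈ Uhat, τ (F xhat) = |B.det|⁻¹ • B.mulVec (tauhat xhat)) :
    ∀ xhat ∈ Uhat,
      |B.det| • (DivMat Ξ (F xhat) - τ (F xhat))
        = B.mulVec (DivMat Xihat xhat - tauhat xhat) := by
  intro xhat hx
  set G : (Fin 2 → ℝ) → Fin 2 → ℝ := fun y => B⁻¹ *ᵥ (y - a)
  have hFG : ∀ y, F (G y) = y := fun y => by
    simp only [G, hF, mulVec_mulVec, B.mul_nonsing_inv hB, one_mulVec, sub_add_cancel]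
  have hGF : G (F xhat) = xhat := by
    simp only [G, hF, add_sub_cancel_right, mulVec_mulVec, B.nonsing_inv_mul hB, one_mulVec]
  have hXi_near : Ξ =ᶠ[𝓝 (F xhat)] fun y => (|B.det|⁻¹ • B) * Xihat (G y) * Bᵀ := by
    have hG : Continuous G := by fun_prop
    filter_upwards [hG.continuousAt.preimage_mem_nhds (hGF ▸ hUhat.mem_nhds hx)] with y hy
    rw [← hFG y, hXi _ hy, hFG, smul_mul_assoc, smul_mul_assoc]
  have hdiff : ∀ i j, DifferentiableAt ℝ (fun y => Xihat y i j) xhat := fun i j =>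
    ((hsmooth i j).contDiffAt (hUhat.mem_nhds hx)).differentiableAt one_ne_zero
  have hdet : |B.det| ≠ 0 := abs_ne_zero.2 (isUnit_iff_ne_zero.1 hB)
  calc |B.det| • (DivMat Ξ (F xhat) - τ (F xhat))
      = |B.det| • (|B.det|⁻¹ • B *ᵥ (DivMat Xihat xhat - tauhat xhat)) := by
        rw [htau xhat hx, DivMat_congr hXi_near, hF xhat,
          DivMat_comp_affine_mul_transpose (B.nonsing_inv_mul hB) a
            (differentiableAt_mul_apply _ hdiff),
          DivMat_mul_left _ hdiff, smul_mulVec, mulVec_sub, smul_sub |B.det|⁻¹]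
    _ = B *ᵥ (DivMat Xihat xhat - tauhat xhat) := by
        rw [smul_smul, mul_inv_cancel₀ hdet, one_smul]
end
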